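/- Let R_1, …, R_K be real symmetric positive definite d×d matrices, let R = Σ_{k=1}^K R_k, let W_1, …, W_K be d×q real matrices, let Ŵ be any d×q real matrix, and define W_A = R^{-1} (Σ_{k=1}^K R_k W_k). Then ‖W_A − Ŵ‖ ≤ S_2 · max_{1≤k≤K} ‖W_k − Ŵ‖, where S_2 = max_k λmax(R_k) / min_k λmin(R_k). -/

import Mathlib

open Matrix BigOperators

/-- The spectral norm (ℓ²→ℓ² operator norm) of a real matrix. -/
noncomputable def specNorm {m n : ℕ} (A : Matrix (Fin m) (Fin n) ℝ) : ℝ :=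
  ‖LinearMap.toContinuousLinearMap (Matrix.toEuclideanLin A)‖

/-- The largest (real) eigenvalue of a real matrix, as the supremum of its real spectrum. -/
noncomputable def lambdaMax {d : ℕ} (A : Matrix (Fin d) (Fin d) ℝ) : ℝ :=
  sSup (spectrum ℝ A)

/-- The smallest (real) eigenvalue of a real matrix, as the infimum of its real spectrum. -/
noncomputable def lambdaMin {d : ℕ} (A : Matrix (Fin d) (Fin d) ℝ) : ℝ :=
  sInf (spectrum ℝ A)

/-! Centering at `Ŵ` gives `W_A - Ŵ = R⁻¹ ∑ₖ Rₖ (Wₖ - Ŵ)`, so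
`‖W_A - Ŵ‖ ≤ ‖R⁻¹‖ ∑ₖ ‖Rₖ‖ ‖Wₖ - Ŵ‖`. In the Loewner order every `Rₖ` dominates `m • 1`, where
`m = minⱼ λmin(Rⱼ)`, hence `R ≥ K m • 1` and `‖R⁻¹‖ ≤ (K m)⁻¹` by the functional calculus; and
`‖Rₖ‖ ≤ λmax(Rₖ)`. The factor `K` then cancels. -/

open scoped Matrix.Norms.L2Operator MatrixOrder

lemma specNorm_eq_norm {m n : ℕ} (A : Matrix (Fin m) (Fin n) ℝ) : specNorm A = ‖A‖ := rfl

section Spectrum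

variable {d : ℕ} {A : Matrix (Fin d) (Fin d) ℝ} {x : ℝ}

lemma le_lambdaMax (hx : x ∈ spectrum ℝ A) : x ≤ lambdaMax A :=
  le_csSup A.finite_real_spectrum.bddAbove hx

lemma lambdaMin_le (hx : x ∈ spectrum ℝ A) : lambdaMin A ≤ x :=
  csInf_le A.finite_real_spectrum.bddBelow hx

lemma norm_le_lambdaMax (hA : A.PosSemidef) : ‖A‖ ≤ lambdaMax A := by
  have hnonneg : ∀ x ∈ spectrum ℝ A, 0 ≤ x := fun x hx =>
    spectrum_nonneg_of_nonneg hA.nonneg hx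
  have hsa := hA.isHermitian.isSelfAdjoint
  calc ‖A‖ = ‖cfc id A‖ := by rw [cfc_id ℝ A]
    _ ≤ lambdaMax A := norm_cfc_le (Real.sSup_nonneg hnonneg) fun x hx => by
      rw [id, Real.norm_of_nonneg (hnonneg x hx)]
      exact le_lambdaMax hx

lemma lambdaMin_pos [Nonempty (Fin d)] (hA : A.PosDef) : 0 < lambdaMin A := by
  obtain ⟨i⟩ := ‹Nonempty (Fin d)›
  have hne : (spectrum ℝ A).Nonempty := ⟨_, hA.isHermitian.eigenvalues_mem_spectrum_real i⟩
  exact hA.isStrictlyPositive.spectrum_pos (hne.csInf_mem A.finite_real_spectrum)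

lemma algebraMap_le_of_le_lambdaMin (hA : A.IsHermitian) {r : ℝ} (hr : r ≤ lambdaMin A) :
    algebraMap ℝ _ r ≤ A :=
  algebraMap_le_of_le_spectrum (ha := hA.isSelfAdjoint) fun _ hx => hr.trans (lambdaMin_le hx)

end Spectrum

variable {n : Type*} [Fintype n] [DecidableEq n] {A : Matrix n n ℝ} {c : ℝ}

lemma isSelfAdjoint_of_algebraMap_le (h : algebraMap ℝ _ c ≤ A) : IsSelfAdjoint A := by
  have := (Matrix.le_iff.mp h).isHermitian.isSelfAdjoint
  simpa using this.add (IsSelfAdjoint.algebraMap (Matrix n n ℝ) (.all c))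

lemma isUnit_of_algebraMap_le (hc : 0 < c) (h : algebraMap ℝ _ c ≤ A) : IsUnit A := by
  have hA := isSelfAdjoint_of_algebraMap_le h
  refine spectrum.isUnit_of_zero_notMem ℝ fun h0 => ?_
  have hc0 : c ≤ 0 := (algebraMap_le_iff_le_spectrum (ha := hA)).mp h 0 h0
  linarith

lemma norm_inv_le_of_algebraMap_le (hc : 0 < c) (h : algebraMap ℝ _ c ≤ A) :
    ‖A⁻¹‖ ≤ c⁻¹ := by
  have hA := isSelfAdjoint_of_algebraMap_le h
  have hspec : ∀ x ∈ spectrum ℝ A, c ≤ x := (algebraMap_le_iff_le_spectrum (ha := hA)).mp h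
  rw [Matrix.nonsing_inv_eq_ringInverse,
    ← cfc_ringInverse_id (R := ℝ) A (isUnit_of_algebraMap_le hc h) hA]
  refine norm_cfc_le (by positivity) fun x hx => ?_
  have hcx : c ≤ x := hspec x hx
  rw [Real.norm_of_nonneg (inv_nonneg.mpr (hc.le.trans hcx))]
  exact inv_anti₀ hc hcx

lemma norm_inv_sum_mul_sum_sub_le {ι m : Type*} [Fintype ι] [Nonempty ι] [Fintype m]
    [DecidableEq m] (R : ι → Matrix n n ℝ) (W : ι → Matrix n m ℝ) (X : Matrix n m ℝ) {L D : ℝ}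
    (hc : 0 < c) (hRc : ∀ k, algebraMap ℝ _ c ≤ R k) (hRL : ∀ k, ‖R k‖ ≤ L)
    (hWD : ∀ k, ‖W k - X‖ ≤ D) :
    ‖(∑ k, R k)⁻¹ * (∑ k, R k * W k) - X‖ ≤ L / c * D := by
  have hN : (0 : ℝ) < Fintype.card ι := Nat.cast_pos.mpr Fintype.card_pos
  have hL : 0 ≤ L := (norm_nonneg _).trans (hRL (Classical.arbitrary ι))
  have hD : 0 ≤ D := (norm_nonneg _).trans (hWD (Classical.arbitrary ι))
  have hsum : algebraMap ℝ _ (Fintype.card ι * c) ≤ ∑ k, R k := by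
    calc algebraMap ℝ _ (Fintype.card ι * c) = ∑ _k : ι, algebraMap ℝ (Matrix n n ℝ) c := by
          simp [Algebra.smul_def]
      _ ≤ ∑ k, R k := Finset.sum_le_sum fun k _ => hRc k
  have hdet : IsUnit (∑ k, R k).det :=
    (Matrix.isUnit_iff_isUnit_det _).mp (isUnit_of_algebraMap_le (by positivity) hsum)
  have hcenter : (∑ k, R k)⁻¹ * (∑ k, R k * W k) - X = (∑ k, R k)⁻¹ * ∑ k, R k * (W k - X) := by
    have hsplit : ∑ k, R k * (W k - X) = ∑ k, R k * W k - (∑ k, R k) * X := by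
      simp only [Matrix.mul_sub, Finset.sum_sub_distrib, Matrix.sum_mul]
    rw [hsplit, Matrix.mul_sub, ← Matrix.mul_assoc, Matrix.nonsing_inv_mul _ hdet, Matrix.one_mul]
  calc ‖(∑ k, R k)⁻¹ * (∑ k, R k * W k) - X‖
      ≤ ‖(∑ k, R k)⁻¹‖ * ∑ k, ‖R k‖ * ‖W k - X‖ := by
        rw [hcenter]
        refine (Matrix.l2_opNorm_mul _ _).trans (mul_le_mul_of_nonneg_left ?_ (norm_nonneg _))
        exact (norm_sum_le _ _).trans (Finset.sum_le_sum fun k _ => Matrix.l2_opNorm_mul _ _)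
    _ ≤ (Fintype.card ι * c)⁻¹ * ∑ _k : ι, L * D := by
        gcongr with k
        · exact norm_inv_le_of_algebraMap_le (by positivity) hsum
        · exact hRL k
        · exact hWD k
    _ = L / c * D := by
        rw [Finset.sum_const, Finset.card_univ, nsmul_eq_mul]
        field_simp

theorem adml_aggregation_bound_posdef {d q K : ℕ} (hK : 1 ≤ K)
    (R : Fin K → Matrix (Fin d) (Fin d) ℝ)
    (hpd : ∀ k, (R k).PosDef)
    (W : Fin K → Matrix (Fin d) (Fin q) ℝ)
    (What : Matrix (Fin d) (Fin q) ℝ)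
    (WA : Matrix (Fin d) (Fin q) ℝ)
    (hWA : WA = (∑ k, R k)⁻¹ * (∑ k, R k * W k))
    (S2 : ℝ)
    (hS2 : S2 = (⨆ k, lambdaMax (R k)) / ⨅ k, lambdaMin (R k)) :
    specNorm (WA - What) ≤ S2 * ⨆ k, specNorm (W k - What) := by
  have : Nonempty (Fin K) := ⟨⟨0, hK⟩⟩
  simp only [specNorm_eq_norm]
  rcases isEmpty_or_nonempty (Fin d) with _ | _
  · simp [Subsingleton.elim _ (0 : Matrix (Fin d) (Fin q) ℝ)]
  subst hWA hS2
  refine norm_inv_sum_mul_sum_sub_le R W What ?_ (fun k => ?_) (fun k => ?_) (fun k => ?_)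
  · obtain ⟨k, hk⟩ := exists_eq_ciInf_of_finite (f := fun k => lambdaMin (R k))
    exact hk ▸ lambdaMin_pos (hpd k)
  · exact algebraMap_le_of_le_lambdaMin (hpd k).isHermitian
      (ciInf_le (Set.finite_range fun k => lambdaMin (R k)).bddBelow k)
  · exact (norm_le_lambdaMax (hpd k).posSemidef).trans
      (le_ciSup (Set.finite_range fun k => lambdaMax (R k)).bddAbove k)
  · exact le_ciSup (Set.finite_range fun k => ‖W k - What‖).bddAbove k
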